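/- Let G be a bipartite graph on X ⊔ Y without isolated vertices. Then ind-match(G) = ord-match(G) = 2 if and only if the bipartite complement G^{bc} of G is a disjoint union of complete bipartite graphs H_1,...,H_s with s ≥ 2, at least two of which are not isolated vertices. -/

import Mathlib

/-- `a b : Fin r → V` describe a matching of size `r` in `G`:
the edges `aᵢbᵢ` are pairwise disjoint edges of `G`. -/
def IsMatchingPair {V : Type*} (G : SimpleGraph V) (r : ℕ) (a b : Fin r → V) : Prop :=
  (∀ i, G.Adj (a i) (b i)) ∧ Function.Injective a ∧ Function.Injective b ∧
    (∀ i j, a i ≠ b j)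

/-- An induced matching: a matching such that no two of its edges are joined by an edge. -/
def IsInducedMatchingPair {V : Type*} (G : SimpleGraph V) (r : ℕ) (a b : Fin r → V) : Prop :=
  IsMatchingPair G r a b ∧
    ∀ i j, i ≠ j → ¬ G.Adj (a i) (a j) ∧ ¬ G.Adj (a i) (b j) ∧ ¬ G.Adj (b i) (b j)

/-- An ordered matching: a matching `a₁b₁, …, a_r b_r` with `{a₁, …, a_r}` independent and
`aᵢbⱼ ∈ E(G) → i ≤ j`. -/
def IsOrderedMatchingPair {V : Type*} (G : SimpleGraph V) (r : ℕ) (a b : Fin r → V) : Prop :=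
  IsMatchingPair G r a b ∧ (∀ i j, ¬ G.Adj (a i) (a j)) ∧
    ∀ i j, G.Adj (a i) (b j) → i ≤ j

/-- The induced matching number. -/
noncomputable def indMatchNum {V : Type*} (G : SimpleGraph V) : ℕ :=
  sSup {r | ∃ a b : Fin r → V, IsInducedMatchingPair G r a b}

/-- The ordered matching number. -/
noncomputable def ordMatchNum {V : Type*} (G : SimpleGraph V) : ℕ :=
  sSup {r | ∃ a b : Fin r → V, IsOrderedMatchingPair G r a b}

/-- A graph on `X ⊕ Y` is bipartite with parts `X` and `Y`: every edge joins
a vertex of `X` with a vertex of `Y`. -/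
def IsBipartiteOn {X Y : Type*} (G : SimpleGraph (X ⊕ Y)) : Prop :=
  ∀ u v, G.Adj u v → (u.isLeft ∧ v.isRight) ∨ (u.isRight ∧ v.isLeft)

/-- `G` has no isolated vertices. -/
def NoIsolated {V : Type*} (G : SimpleGraph V) : Prop :=
  ∀ v, ∃ w, G.Adj v w

/-- `CSet G I` is the set of vertices of `Y` whose neighbourhood in `X` is exactly `I`. -/
def CSet {X Y : Type*} (G : SimpleGraph (X ⊕ Y)) (I : Set X) : Set Y :=
  {y | ∀ x, G.Adj (Sum.inl x) (Sum.inr y) ↔ x ∈ I}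

/-- `cNum G I` is the number of vertices of `Y` whose neighbourhood in `X` is exactly `I`. -/
noncomputable def cNum {X Y : Type*} (G : SimpleGraph (X ⊕ Y)) (I : Set X) : ℕ :=
  (CSet G I).ncard

/-- The bipartite complement of a bipartite graph on `X ⊕ Y`. -/
def bipComp {X Y : Type*} (G : SimpleGraph (X ⊕ Y)) : SimpleGraph (X ⊕ Y) where
  Adj u v := ((u.isLeft ∧ v.isRight) ∨ (u.isRight ∧ v.isLeft)) ∧ ¬ G.Adj u v
  symm := by
    constructor
    rintro u v ⟨h1, h2⟩
    exact ⟨by tauto, fun h => h2 h.symm⟩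
  loopless := by
    constructor
    rintro u ⟨h1, _⟩
    rcases u with x | y <;> simp_all

/-- A bipartite graph is a disjoint union of complete bipartite graphs iff whenever
`x ~ y`, `x' ~ y` and `x' ~ y'`, also `x ~ y'` (each connected component is a biclique). -/
def IsDisjUnionOfCompleteBipartite {X Y : Type*} (H : SimpleGraph (X ⊕ Y)) : Prop :=
  ∀ (x x' : X) (y y' : Y),
    H.Adj (Sum.inl x) (Sum.inr y) → H.Adj (Sum.inl x') (Sum.inr y) →
    H.Adj (Sum.inl x') (Sum.inr y') → H.Adj (Sum.inl x) (Sum.inr y')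

/-!
Write `H` for the bipartite complement of `G`. An induced path `x - y - x' - y'` in `H`, together
with a `G`-neighbour of `y` and one of `x'`, yields an ordered matching of size 3 in `G`.
Conversely, in an ordered matching `a₀b₀, a₁b₁, a₂b₂` two of the `aᵢ` lie on one side, and three
of the forced non-edges form such a path in `H`. Hence `ord-match(G) ≤ 2` exactly when every
component of `H` is a biclique. In that case an induced matching `xy, x'y'` of `G` amounts to two
edges `xy'`, `x'y` of `H` lying in different components, and `ind-match(G) ≤ ord-match(G)`.
-/

open Sum SimpleGraph

section Matchings

variable {V : Type*} {G : SimpleGraph V} {r : ℕ} {a b : Fin r → V}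

theorem IsOrderedMatchingPair.of_adj (hadj : ∀ i, G.Adj (a i) (b i))
    (hind : ∀ i j, ¬ G.Adj (a i) (a j)) (hord : ∀ i j, G.Adj (a i) (b j) → i ≤ j) :
    IsOrderedMatchingPair G r a b := by
  refine ⟨⟨hadj, fun i j hij => ?_, fun i j hij => ?_, fun i j hij => ?_⟩, hind, hord⟩
  · exact le_antisymm (hord i j (hij ▸ hadj j)) (hord j i (hij ▸ hadj i))
  · exact le_antisymm (hord i j (hij ▸ hadj i)) (hord j i (hij ▸ hadj j))
  · exact hind j i (hij ▸ hadj j)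

theorem IsInducedMatchingPair.of_adj (hadj : ∀ i, G.Adj (a i) (b i))
    (hind : ∀ i j, i ≠ j → ¬ G.Adj (a i) (a j) ∧ ¬ G.Adj (a i) (b j) ∧ ¬ G.Adj (b i) (b j)) :
    IsInducedMatchingPair G r a b := by
  refine ⟨⟨hadj, fun i j hij => ?_, fun i j hij => ?_, fun i j hij => ?_⟩, hind⟩
  · by_contra hne
    exact (hind i j hne).2.1 (hij ▸ hadj j)
  · by_contra hne
    exact (hind i j hne).2.1 (hij ▸ hadj i)
  · obtain rfl | hne := eq_or_ne i j
    · exact G.ne_of_adj (hadj i) hij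
    · exact (hind j i hne.symm).1 (hij ▸ hadj j)

theorem IsInducedMatchingPair.isOrderedMatchingPair (h : IsInducedMatchingPair G r a b) :
    IsOrderedMatchingPair G r a b := by
  refine .of_adj h.1.1 (fun i j => ?_) (fun i j hij => ?_)
  · obtain rfl | hne := eq_or_ne i j
    · exact G.loopless.irrefl _
    · exact (h.2 i j hne).1
  · by_contra hne
    exact (h.2 i j (ne_of_not_le hne)).2.1 hij

theorem IsOrderedMatchingPair.comp_castLE (h : IsOrderedMatchingPair G r a b) {m : ℕ}
    (hmr : m ≤ r) : IsOrderedMatchingPair G m (a ∘ Fin.castLE hmr) (b ∘ Fin.castLE hmr) :=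
  .of_adj (fun _ => h.1.1 _) (fun _ _ => h.2.1 _ _)
    (fun _ _ hij => (Fin.castLE_le_castLE_iff hmr).1 (h.2.2 _ _ hij))

theorem Nat.sSup_eq_iff_isGreatest {s : Set ℕ} (hs : s.Nonempty) (hbdd : BddAbove s) {n : ℕ} :
    sSup s = n ↔ IsGreatest s n :=
  ⟨fun h => h ▸ ⟨Nat.sSup_mem hs hbdd, fun _ hm => le_csSup hbdd hm⟩, IsGreatest.csSup_eq⟩

theorem bddAbove_setOf_isMatchingPair [Fintype V] :
    BddAbove {r | ∃ a b : Fin r → V, IsMatchingPair G r a b} :=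
  ⟨Fintype.card V, fun r ⟨a, _, _, ha, _⟩ => by simpa using Fintype.card_le_of_injective a ha⟩

theorem indMatchNum_eq_iff [Fintype V] {n : ℕ} :
    indMatchNum G = n ↔ IsGreatest {r | ∃ a b : Fin r → V, IsInducedMatchingPair G r a b} n :=
  Nat.sSup_eq_iff_isGreatest (s := {r | ∃ a b : Fin r → V, IsInducedMatchingPair G r a b})
    ⟨0, Fin.elim0, Fin.elim0, .of_adj (fun i => i.elim0) (fun i => i.elim0)⟩
    (bddAbove_setOf_isMatchingPair.mono <|
      Set.ofPred_subset_ofPred.2 fun _ ⟨a, b, h⟩ => ⟨a, b, h.1⟩)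

theorem ordMatchNum_eq_iff [Fintype V] {n : ℕ} :
    ordMatchNum G = n ↔ IsGreatest {r | ∃ a b : Fin r → V, IsOrderedMatchingPair G r a b} n :=
  Nat.sSup_eq_iff_isGreatest (s := {r | ∃ a b : Fin r → V, IsOrderedMatchingPair G r a b})
    ⟨0, Fin.elim0, Fin.elim0, .of_adj (fun i => i.elim0) (fun i => i.elim0) (fun i => i.elim0)⟩
    (bddAbove_setOf_isMatchingPair.mono <|
      Set.ofPred_subset_ofPred.2 fun _ ⟨a, b, h⟩ => ⟨a, b, h.1⟩)

end Matchings

section Bipartite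

variable {X Y : Type*} {G : SimpleGraph (X ⊕ Y)}

namespace IsBipartiteOn

theorem not_adj_inl_inl (hG : IsBipartiteOn G) (x x' : X) : ¬ G.Adj (inl x) (inl x') := by
  intro h
  simpa using hG _ _ h

theorem not_adj_inr_inr (hG : IsBipartiteOn G) (y y' : Y) : ¬ G.Adj (inr y) (inr y') := by
  intro h
  simpa using hG _ _ h

theorem isLeft_eq_not (hG : IsBipartiteOn G) {u v : X ⊕ Y} (h : G.Adj u v) :
    v.isLeft = !u.isLeft := by
  rcases u with x | y <;> rcases v with x' | y'
  · exact absurd h (hG.not_adj_inl_inl _ _)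
  all_goals first | rfl | exact absurd h (hG.not_adj_inr_inr _ _)

theorem exists_adj_inl_inr (hG : IsBipartiteOn G) {u v : X ⊕ Y} (h : G.Adj u v) :
    ∃ x y, G.Adj (inl x) (inr y) ∧ inl x ∈ ({u, v} : Set (X ⊕ Y)) ∧
      inr y ∈ ({u, v} : Set (X ⊕ Y)) := by
  rcases u with x | y <;> rcases v with x' | y'
  · exact absurd h (hG.not_adj_inl_inl _ _)
  · exact ⟨x, y', h, by simp, by simp⟩
  · exact ⟨x', y, h.symm, by simp, by simp⟩
  · exact absurd h (hG.not_adj_inr_inr _ _)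

end IsBipartiteOn

theorem NoIsolated.exists_adj_inr (hiso : NoIsolated G) (hG : IsBipartiteOn G) (x : X) :
    ∃ y, G.Adj (inl x) (inr y) := by
  obtain ⟨_ | y, h⟩ := hiso (inl x)
  · exact absurd h (hG.not_adj_inl_inl _ _)
  · exact ⟨y, h⟩

theorem NoIsolated.exists_adj_inl (hiso : NoIsolated G) (hG : IsBipartiteOn G) (y : Y) :
    ∃ x, G.Adj (inl x) (inr y) := by
  obtain ⟨x | _, h⟩ := hiso (inr y)
  · exact ⟨x, h.symm⟩
  · exact absurd h (hG.not_adj_inr_inr _ _)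

theorem isBipartiteOn_bipComp (G : SimpleGraph (X ⊕ Y)) : IsBipartiteOn (bipComp G) :=
  fun _ _ h => h.1

@[simp]
theorem bipComp_adj_inl_inr {x : X} {y : Y} :
    (bipComp G).Adj (inl x) (inr y) ↔ ¬ G.Adj (inl x) (inr y) := by
  simp [bipComp]

theorem adj_of_not_reachable_bipComp {x x' : X} {y : Y}
    (h : ¬ (bipComp G).Reachable (inl x) (inl x')) (hx'y : (bipComp G).Adj (inl x') (inr y)) :
    G.Adj (inl x) (inr y) := by
  by_contra hxy
  exact h ((bipComp_adj_inl_inr.2 hxy).reachable.trans hx'y.symm.reachable)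

end Bipartite

namespace IsDisjUnionOfCompleteBipartite

variable {X Y : Type*}

theorem adj_of_reachable {H : SimpleGraph (X ⊕ Y)} (hH : IsBipartiteOn H)
    (hc : IsDisjUnionOfCompleteBipartite H) {x x' : X} (hr : H.Reachable (inl x) (inl x'))
    {y : Y} (hy : H.Adj (inl x') (inr y)) : H.Adj (inl x) (inr y) := by
  suffices ∀ w, Relation.ReflTransGen H.Adj (inl x) w →
      w.elim (fun x' => ∀ y, H.Adj (inl x') (inr y) → H.Adj (inl x) (inr y))
        (fun y => H.Adj (inl x) (inr y)) from
    this _ ((reachable_iff_reflTransGen _ _).1 hr) y hy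
  -- Along a walk from `inl x`, left vertices have neighbourhoods inside that of `x`, and right
  -- vertices are neighbours of `x`.
  intro w hw
  induction hw with
  | refl => exact fun _ => id
  | @tail v w _ hvw ih =>
    rcases v with x₁ | y₁ <;> rcases w with x₂ | y₂
    · exact absurd hvw (hH.not_adj_inl_inl _ _)
    · exact ih y₂ hvw
    · exact fun y h => hc x x₂ y₁ y ih hvw.symm h
    · exact absurd hvw (hH.not_adj_inr_inr _ _)

variable {G : SimpleGraph (X ⊕ Y)}

theorem not_reachable (hc : IsDisjUnionOfCompleteBipartite (bipComp G)) {x x' : X} {y : Y}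
    (hxy : G.Adj (inl x) (inr y)) (hx'y : ¬ G.Adj (inl x') (inr y)) :
    ¬ (bipComp G).Reachable (inl x) (inl x') := fun hr =>
  bipComp_adj_inl_inr.1
    (hc.adj_of_reachable (isBipartiteOn_bipComp G) hr (bipComp_adj_inl_inr.2 hx'y)) hxy

/-- In `bipComp G` the four vertices form a path `u - q - p - v`, whose ends lie in one
biclique. -/
theorem not_adj (hc : IsDisjUnionOfCompleteBipartite (bipComp G)) (hG : IsBipartiteOn G)
    {u v p q : X ⊕ Y} (hp : p.isLeft = u.isLeft) (hq : q.isLeft = v.isLeft)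
    (hpv : ¬ G.Adj p v) (huq : ¬ G.Adj u q) (hpq : ¬ G.Adj p q) : ¬ G.Adj u v := by
  intro huv
  rcases u with x | y <;> rcases v with x' | y' <;> rcases p with x₁ | y₁ <;>
    rcases q with x₂ | y₂ <;> simp only [isLeft_inl, isLeft_inr, reduceCtorEq] at hp hq
  · exact hG.not_adj_inl_inl _ _ huv
  · exact bipComp_adj_inl_inr.1 (hc x x₁ y₂ y' (by simpa) (by simpa) (by simpa)) huv
  · exact bipComp_adj_inl_inr.1 (hc x' x₂ y₁ y (by simpa [G.adj_comm] using hpv)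
      (by simpa [G.adj_comm] using hpq) (by simpa [G.adj_comm] using huq)) huv.symm
  · exact hG.not_adj_inr_inr _ _ huv

theorem not_isOrderedMatchingPair_three (hc : IsDisjUnionOfCompleteBipartite (bipComp G))
    (hG : IsBipartiteOn G) (a b : Fin 3 → X ⊕ Y) : ¬ IsOrderedMatchingPair G 3 a b := by
  rintro ⟨⟨hab, -⟩, hind, hord⟩
  -- Two of `a 0, a 1, a 2` lie on a common side; this decides which edge `a i b i` and which
  -- `p`, `q` give the forbidden path.
  have hb (i : Fin 3) : (b i).isLeft = !(a i).isLeft := hG.isLeft_eq_not (hab i)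
  have hlt (i j : Fin 3) (hji : j < i) : ¬ G.Adj (a i) (b j) := fun h => (hord i j h).not_gt hji
  by_cases h12 : (a 1).isLeft = (a 2).isLeft <;> by_cases h01 : (a 0).isLeft = (a 1).isLeft
  · refine hc.not_adj hG (p := a 2) (q := b 0) ?_ ?_ (hlt 2 1 (by decide)) (hlt 1 0 (by decide))
      (hlt 2 0 (by decide)) (hab 1)
    all_goals grind
  · refine hc.not_adj hG (p := a 2) (q := a 0) ?_ ?_ (hlt 2 1 (by decide)) (hind 1 0) (hind 2 0)
      (hab 1)
    all_goals grind
  · refine hc.not_adj hG (p := a 1) (q := a 2) ?_ ?_ (hlt 1 0 (by decide)) (hind 0 2) (hind 1 2)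
      (hab 0)
    all_goals grind
  · refine hc.not_adj hG (p := a 2) (q := a 1) ?_ ?_ (hlt 2 0 (by decide)) (hind 0 1) (hind 2 1)
      (hab 0)
    all_goals grind

theorem le_two (hc : IsDisjUnionOfCompleteBipartite (bipComp G)) (hG : IsBipartiteOn G)
    {r : ℕ} {a b : Fin r → X ⊕ Y} (h : IsOrderedMatchingPair G r a b) : r ≤ 2 := by
  by_contra! hr
  exact hc.not_isOrderedMatchingPair_three hG _ _ (h.comp_castLE hr)

end IsDisjUnionOfCompleteBipartite

section BipartiteMatchings

variable {X Y : Type*} {G : SimpleGraph (X ⊕ Y)}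

theorem isDisjUnionOfCompleteBipartite_bipComp_of_forall_not_isOrderedMatchingPair_three
    (hG : IsBipartiteOn G) (hiso : NoIsolated G)
    (h : ∀ a b : Fin 3 → X ⊕ Y, ¬ IsOrderedMatchingPair G 3 a b) :
    IsDisjUnionOfCompleteBipartite (bipComp G) := by
  intro x x' y y' hxy hx'y hx'y'
  by_contra hxy'
  simp only [bipComp_adj_inl_inr, not_not] at hxy hx'y hx'y' hxy'
  obtain ⟨x₀, hx₀⟩ := hiso.exists_adj_inl hG y
  obtain ⟨y₂, hy₂⟩ := hiso.exists_adj_inr hG x'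
  -- `x₀y, xy', x'y₂` is ordered because `xy, x'y, x'y'` are non-edges.
  refine h (inl ∘ ![x₀, x, x']) (inr ∘ ![y, y', y₂]) (.of_adj ?_ ?_ ?_)
  · intro i
    fin_cases i <;> assumption
  · exact fun _ _ => hG.not_adj_inl_inl _ _
  · intro i j hij
    fin_cases i <;> fin_cases j <;> first | decide | contradiction

theorem IsInducedMatchingPair.exists_inl_inr (hG : IsBipartiteOn G) {a b : Fin 2 → X ⊕ Y}
    (h : IsInducedMatchingPair G 2 a b) :
    ∃ x x' y y', G.Adj (inl x) (inr y) ∧ G.Adj (inl x') (inr y') ∧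
      ¬ G.Adj (inl x) (inr y') ∧ ¬ G.Adj (inl x') (inr y) := by
  obtain ⟨⟨hab, -⟩, hind⟩ := h
  have hcross : ∀ s ∈ ({a 0, b 0} : Set (X ⊕ Y)), ∀ t ∈ ({a 1, b 1} : Set (X ⊕ Y)),
      ¬ G.Adj s t := by
    rintro s (rfl | rfl) t (rfl | rfl)
    · exact (hind 0 1 (by decide)).1
    · exact (hind 0 1 (by decide)).2.1
    · exact fun h => (hind 1 0 (by decide)).2.1 h.symm
    · exact (hind 0 1 (by decide)).2.2
  obtain ⟨x, y, hxy, hx, hy⟩ := hG.exists_adj_inl_inr (hab 0)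
  obtain ⟨x', y', hx'y', hx', hy'⟩ := hG.exists_adj_inl_inr (hab 1)
  exact ⟨x, x', y, y', hxy, hx'y', hcross _ hx _ hy', fun h => hcross _ hy _ hx' h.symm⟩

theorem isInducedMatchingPair_two (hG : IsBipartiteOn G) {x x' : X} {y y' : Y}
    (hxy : G.Adj (inl x) (inr y)) (hx'y' : G.Adj (inl x') (inr y'))
    (hxy' : ¬ G.Adj (inl x) (inr y')) (hx'y : ¬ G.Adj (inl x') (inr y)) :
    IsInducedMatchingPair G 2 (inl ∘ ![x, x']) (inr ∘ ![y, y']) := by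
  refine .of_adj (fun i => ?_) fun i j hij =>
    ⟨hG.not_adj_inl_inl _ _, ?_, hG.not_adj_inr_inr _ _⟩
  · fin_cases i <;> assumption
  · fin_cases i <;> fin_cases j <;> first | exact absurd rfl hij | assumption

end BipartiteMatchings

/-- A bipartite graph `G` without isolated vertices has `ind-match(G) = ord-match(G) = 2`
iff its bipartite complement is a disjoint union of complete bipartite graphs at least two
of which are not isolated vertices (i.e. the complement has edges in at least two distinct
connected components). -/
theorem indMatch_eq_ordMatch_eq_two_iff_bipComp {X Y : Type*} [Fintype X] [Fintype Y]
    (G : SimpleGraph (X ⊕ Y)) (hbip : IsBipartiteOn G) (hiso : NoIsolated G) :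
    (indMatchNum G = 2 ∧ ordMatchNum G = 2) ↔
      (IsDisjUnionOfCompleteBipartite (bipComp G) ∧
        ∃ (x x' : X) (y y' : Y),
          (bipComp G).Adj (Sum.inl x) (Sum.inr y) ∧
          (bipComp G).Adj (Sum.inl x') (Sum.inr y') ∧
          ¬ (bipComp G).Reachable (Sum.inl x) (Sum.inl x')) := by
  rw [indMatchNum_eq_iff, ordMatchNum_eq_iff]
  constructor
  · rintro ⟨hind, hord⟩
    have hc := isDisjUnionOfCompleteBipartite_bipComp_of_forall_not_isOrderedMatchingPair_three
      hbip hiso fun a b h => absurd (hord.2 ⟨a, b, h⟩) (by decide)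
    obtain ⟨a, b, hab⟩ := hind.1
    obtain ⟨x, x', y, y', hxy, hx'y', hxy', hx'y⟩ := hab.exists_inl_inr hbip
    exact ⟨hc, x, x', y', y, bipComp_adj_inl_inr.2 hxy', bipComp_adj_inl_inr.2 hx'y,
      hc.not_reachable hxy hx'y⟩
  · rintro ⟨hc, x, x', y, y', hxy, hx'y', hr⟩
    have hmatch := isInducedMatchingPair_two hbip (adj_of_not_reachable_bipComp hr hx'y')
      (adj_of_not_reachable_bipComp (mt Reachable.symm hr) hxy)
      (bipComp_adj_inl_inr.1 hxy) (bipComp_adj_inl_inr.1 hx'y')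
    refine ⟨⟨⟨_, _, hmatch⟩, ?_⟩, ⟨_, _, hmatch.isOrderedMatchingPair⟩, ?_⟩
    · rintro r ⟨a, b, h⟩
      exact hc.le_two hbip h.isOrderedMatchingPair
    · rintro r ⟨a, b, h⟩
      exact hc.le_two hbip h
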